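/- arXiv:math/9810130 — 2 statements merged into one kernel-verified Lean document; each statement's English description precedes it below -/
import Mathlib

section
/- Let h : ℂ \ {0} → ℂ be inversion through the circle of radius t > 0, h(z) = t²·z/|z|². Then for any complex z with 0 < |z| < t (so that t+z, t−z, and the relevant intermediate points are nonzero), t² − t·h((h(t+z) + h(t−z))/2) = z². -/
/-- Inversion through the circle of radius `t` centered at the origin. -/
noncomputable def circInv (t : ℝ) (z : ℂ) : ℂ := (t : ℂ) ^ 2 * z / ((‖z‖ : ℂ) ^ 2)

lemma circInv_eq (t : ℝ) (z : ℂ) (hz : z ≠ 0) :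
    circInv t z = (t : ℂ) ^ 2 / (starRingEnd ℂ) z := by
  unfold circInv
  have h : ((‖z‖ : ℂ)) ^ 2 = z * (starRingEnd ℂ) z := by
    rw [Complex.mul_conj]; norm_cast; exact Complex.sq_norm z
  rw [h]
  have hc : (starRingEnd ℂ) z ≠ 0 := star_ne_zero.mpr hz
  field_simp

theorem square_via_inversions (t : ℝ) (ht : 0 < t) (z : ℂ)
    (hz : 0 < ‖z‖) (hzt : ‖z‖ < t) :
    (t : ℂ) ^ 2 - (t : ℂ) * circInv t ((circInv t ((t : ℂ) + z) + circInv t ((t : ℂ) - z)) / 2)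
      = z ^ 2 := by
  have ht0 : (t : ℂ) ≠ 0 := by exact_mod_cast ht.ne'
  have hA : (t : ℂ) + z ≠ 0 := by
    intro h
    have : z = -(t : ℂ) := by linear_combination h
    rw [this] at hzt
    simp [Complex.norm_real, abs_of_pos ht] at hzt
  have hB : (t : ℂ) - z ≠ 0 := by
    intro h
    have : z = (t : ℂ) := by linear_combination -h
    rw [this] at hzt
    simp [Complex.norm_real, abs_of_pos ht] at hzt
  have hcA : (starRingEnd ℂ) ((t : ℂ) + z) ≠ 0 := star_ne_zero.mpr hA
  have hcB : (starRingEnd ℂ) ((t : ℂ) - z) ≠ 0 := star_ne_zero.mpr hB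
  rw [circInv_eq t _ hA, circInv_eq t _ hB]
  set w : ℂ := ((t : ℂ) ^ 2 / (starRingEnd ℂ) ((t : ℂ) + z)
      + (t : ℂ) ^ 2 / (starRingEnd ℂ) ((t : ℂ) - z)) / 2 with hw
  have hwval : w = (t : ℂ) ^ 3 * (starRingEnd ℂ) (1 / (((t : ℂ) + z) * ((t : ℂ) - z))) := by
    rw [hw]
    simp only [one_div, map_inv₀, map_mul, map_add, map_sub, Complex.conj_ofReal]
    have hcA' : (t : ℂ) + (starRingEnd ℂ) z ≠ 0 := by simpa using hcA
    have hcB' : (t : ℂ) - (starRingEnd ℂ) z ≠ 0 := by simpa using hcB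
    have h2 : (t : ℂ) ^ 2 - ((starRingEnd ℂ) z) ^ 2 ≠ 0 := by
      have := mul_ne_zero hcA' hcB'
      intro h; apply this; linear_combination h
    field_simp
    ring
  have hAB : ((t : ℂ) + z) * ((t : ℂ) - z) ≠ 0 := mul_ne_zero hA hB
  have hcAB : (starRingEnd ℂ) (((t : ℂ) + z) * ((t : ℂ) - z)) ≠ 0 := star_ne_zero.mpr hAB
  have hw0 : w ≠ 0 := by
    rw [hwval]
    apply mul_ne_zero (pow_ne_zero _ ht0)
    rw [one_div, map_inv₀]
    exact inv_ne_zero hcAB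
  rw [circInv_eq t w hw0, hwval]
  rw [map_mul, map_div₀, map_one]
  simp only [Complex.conj_conj, map_pow, Complex.conj_ofReal]
  field_simp
  rw [map_div₀, map_one, Complex.conj_conj]
  field_simp
  ring
end

section
/- Let Z ⊆ ℂᵏ be invariant under the diagonal action of Euc(2) and Z₀ = Z ∩ (ℂᵏ⁻¹ × {0}). Then the quotient Z/Euc(2) is compact if and only if Z₀ is compact. -/
/-- The setoid on a subset of `ℂᵏ` whose classes are orbits of the diagonal action
of the Euclidean group `Euc(2)` (the isometry group of `ℂ`). -/
def eucSetoid {k : ℕ} (Z : Set (Fin k → ℂ)) : Setoid Z where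
  r x y := ∃ β : ℂ ≃ᵢ ℂ, ∀ i, β (x.1 i) = y.1 i
  iseqv := by
    constructor
    · exact fun x => ⟨IsometryEquiv.refl ℂ, fun i => rfl⟩
    · rintro x y ⟨β, h⟩
      exact ⟨β.symm, fun i => by rw [← h i, IsometryEquiv.symm_apply_apply]⟩
    · rintro x y z ⟨β, h⟩ ⟨γ, h'⟩
      exact ⟨β.trans γ, fun i => by simp [IsometryEquiv.trans_apply, h i, h' i]⟩

noncomputable section

open Metric Complex ComplexConjugate

namespace EucHelper

variable {n : ℕ}

/-- Diagonal action of an isometry of `ℂ` on tuples. -/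
def diagMap (γ : ℂ ≃ᵢ ℂ) : (Fin n → ℂ) ≃ᵢ (Fin n → ℂ) where
  toEquiv := Equiv.piCongrRight fun _ => γ.toEquiv
  isometry_toFun := by
    intro u v
    simp only [Equiv.piCongrRight, Equiv.coe_fn_mk]
    rw [edist_pi_def, edist_pi_def]
    exact Finset.sup_congr rfl fun i _ => γ.isometry.edist_eq _ _

@[simp] lemma diagMap_apply (γ : ℂ ≃ᵢ ℂ) (u : Fin n → ℂ) (i : Fin n) :
    diagMap γ u i = γ (u i) := rfl

/-- Classification of isometries of `ℂ` fixing `0`. -/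
lemma isometry_fix0 (γ : ℂ ≃ᵢ ℂ) (h0 : γ 0 = 0) :
    ∃ a : Circle, (∀ u, γ u = (a : ℂ) * u) ∨ (∀ u, γ u = (a : ℂ) * conj u) := by
  set L := γ.toRealLinearIsometryEquivOfMapZero h0 with hL
  have hLγ : ∀ u, L u = γ u := fun u => by
    rw [hL]
    exact congrFun (γ.coe_toRealLinearIsometryEquivOfMapZero h0) u
  obtain ⟨a, ha | ha⟩ := linear_isometry_complex L
  · exact ⟨a, Or.inl fun u => by rw [← hLγ u, ha, rotation_apply]⟩
  · refine ⟨a, Or.inr fun u => ?_⟩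
    rw [← hLγ u, ha]
    simp [LinearIsometryEquiv.trans_apply]

/-- The orbit of a tuple under isometries of `ℂ` fixing `0`, described concretely. -/
def orb (w : Fin n → ℂ) : Set (Fin n → ℂ) :=
  (fun a : Circle => fun i => (a : ℂ) * w i) '' Set.univ ∪
    (fun a : Circle => fun i => (a : ℂ) * conj (w i)) '' Set.univ

lemma mem_orb_self (w : Fin n → ℂ) : w ∈ orb w :=
  Or.inl ⟨1, Set.mem_univ _, by funext i; simp⟩

lemma orb_nonempty (w : Fin n → ℂ) : (orb w).Nonempty := ⟨w, mem_orb_self w⟩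

lemma continuous_coe_circle : Continuous ((↑) : Circle → ℂ) :=
  continuous_induced_dom

lemma isCompact_orb (w : Fin n → ℂ) : IsCompact (orb w) := by
  refine IsCompact.union ?_ ?_ <;>
    exact (isCompact_univ (X := Circle)).image (continuous_pi fun i =>
      (continuous_coe_circle).mul continuous_const)

lemma diag_mem_orb {w : Fin n → ℂ} (γ : ℂ ≃ᵢ ℂ) (h0 : γ 0 = 0) {p : Fin n → ℂ}
    (hp : p ∈ orb w) : (fun i => γ (p i)) ∈ orb w := by
  obtain ⟨a, ha | ha⟩ := isometry_fix0 γ h0 <;>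
    rcases hp with ⟨b, -, rfl⟩ | ⟨b, -, rfl⟩
  · exact Or.inl ⟨a * b, Set.mem_univ _, by funext i; simp [ha, mul_assoc]⟩
  · exact Or.inr ⟨a * b, Set.mem_univ _, by funext i; simp [ha, mul_assoc]⟩
  · refine Or.inr ⟨a * b⁻¹, Set.mem_univ _, ?_⟩
    funext i
    simp only [ha, Circle.coe_mul, Circle.coe_inv_eq_conj, map_mul, mul_assoc]
  · refine Or.inl ⟨a * b⁻¹, Set.mem_univ _, ?_⟩
    funext i
    simp only [ha, Circle.coe_mul, Circle.coe_inv_eq_conj, map_mul,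
      Complex.conj_conj, mul_assoc]

lemma diagMap_image_orb {w : Fin n → ℂ} (γ : ℂ ≃ᵢ ℂ) (h0 : γ 0 = 0) :
    diagMap γ '' orb w = orb w := by
  apply Set.Subset.antisymm
  · rintro _ ⟨p, hp, rfl⟩
    exact diag_mem_orb γ h0 hp
  · intro p hp
    have h0' : γ.symm 0 = 0 := (IsometryEquiv.symm_apply_eq γ).mpr h0.symm
    refine ⟨fun i => γ.symm (p i), diag_mem_orb γ.symm h0' hp, ?_⟩
    funext i
    simp

variable {k : ℕ}

/-- Normalize a tuple so that its last coordinate is `0`. -/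
def sl (z : Fin (k + 1) → ℂ) : Fin (k + 1) → ℂ := fun i => z i - z (Fin.last k)

lemma continuous_sl : Continuous (sl (k := k)) :=
  continuous_pi fun i => (continuous_apply i).sub (continuous_apply (Fin.last k))

lemma sl_last (z : Fin (k + 1) → ℂ) : sl z (Fin.last k) = 0 := sub_self _

lemma sl_of_last_zero {z : Fin (k + 1) → ℂ} (h : z (Fin.last k) = 0) : sl z = z := by
  funext i; simp [sl, h]

/-- Conjugate an isometry by a translation so that it fixes `0`. -/
def conjTr (β : ℂ ≃ᵢ ℂ) (c : ℂ) : ℂ ≃ᵢ ℂ :=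
  ((IsometryEquiv.addRight c).trans β).trans (IsometryEquiv.addRight (β c)).symm

lemma addRight_symm_apply (d v : ℂ) : (IsometryEquiv.addRight d).symm v = v - d := by
  simp [IsometryEquiv.addRight_symm, sub_eq_add_neg]

lemma conjTr_apply (β : ℂ ≃ᵢ ℂ) (c u : ℂ) : conjTr β c u = β (u + c) - β c := by
  show (IsometryEquiv.addRight (β c)).symm (β (IsometryEquiv.addRight c u)) = _
  rw [addRight_symm_apply]
  rfl

lemma conjTr_zero (β : ℂ ≃ᵢ ℂ) (c : ℂ) : conjTr β c 0 = 0 := by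
  rw [conjTr_apply, zero_add, sub_self]

lemma sl_rel {Z : Set (Fin (k + 1) → ℂ)} {x y : Z} (β : ℂ ≃ᵢ ℂ)
    (h : ∀ i, β (x.1 i) = y.1 i) :
    sl y.1 = diagMap (conjTr β (x.1 (Fin.last k))) (sl x.1) := by
  funext i
  rw [diagMap_apply, conjTr_apply, sl, sl, ← h i, ← h (Fin.last k), sub_add_cancel]

end EucHelper

end

open Metric Complex ComplexConjugate EucHelper

theorem quotient_compact_iff_slice_compact (k : ℕ) (Z : Set (Fin (k + 1) → ℂ))
    (hZ : ∀ β : ℂ ≃ᵢ ℂ, ∀ z ∈ Z, (fun i => β (z i)) ∈ Z) :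
    CompactSpace (Quotient (eucSetoid Z)) ↔
      IsCompact {z ∈ Z | z (Fin.last k) = 0} := by
  set K := {z ∈ Z | z (Fin.last k) = 0} with hKdef
  have hmkcont : Continuous (Quotient.mk (eucSetoid Z)) := continuous_quot_mk
  -- `sl z ∈ Z` for `z ∈ Z`
  have hslZ : ∀ z ∈ Z, sl z ∈ Z := by
    intro z hz
    have h : sl z = fun i => (IsometryEquiv.addRight (-(z (Fin.last k)))) (z i) := by
      funext i
      show z i - z (Fin.last k) = z i + -z (Fin.last k)
      rw [sub_eq_add_neg]
    rw [h]
    exact hZ _ z hz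
  have hslK : ∀ z ∈ Z, sl z ∈ K := fun z hz => ⟨hslZ z hz, sl_last z⟩
  -- `sl z` is equivalent to `z`
  have hslrel : ∀ (z : Fin (k + 1) → ℂ) (hz : z ∈ Z),
      (eucSetoid Z).r ⟨sl z, hslZ z hz⟩ ⟨z, hz⟩ := by
    intro z hz
    refine ⟨IsometryEquiv.addRight (z (Fin.last k)), fun i => ?_⟩
    show z i - z (Fin.last k) + z (Fin.last k) = z i
    abel
  constructor
  · intro hQ
    -- hard direction: the slice is closed and bounded.
    by_cases hZne : Z.Nonempty
    swap
    · have : K = ∅ := by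
        rw [Set.not_nonempty_iff_eq_empty] at hZne
        simp [hKdef, hZne]
      rw [this]; exact isCompact_empty
    obtain ⟨z₀, hz₀⟩ := hZne
    have hQne : Nonempty (Quotient (eucSetoid Z)) := ⟨Quotient.mk _ ⟨z₀, hz₀⟩⟩
    -- bounded
    have hDinv : ∀ (x y : Z), (eucSetoid Z).r x y →
        dist (sl x.1) 0 = dist (sl y.1) 0 := by
      rintro x y ⟨β, h⟩
      rw [sl_rel β h]
      have h0 : diagMap (conjTr β (x.1 (Fin.last k))) (0 : Fin (k + 1) → ℂ) = 0 := by
        funext i; simp [conjTr_zero]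
      conv_rhs => rw [← h0]
      exact ((diagMap _).isometry.dist_eq _ _).symm
    set Dbar : Quotient (eucSetoid Z) → ℝ :=
      Quotient.lift (fun z : Z => dist (sl z.1) 0) hDinv with hDbar
    have hDcont : Continuous Dbar :=
      continuous_quot_lift _
        (continuous_dist.comp ((continuous_sl.comp continuous_subtype_val).prodMk
          continuous_const))
    obtain ⟨qM, -, hqM⟩ := isCompact_univ.exists_isMaxOn Set.univ_nonempty
      hDcont.continuousOn
    set M := Dbar qM with hM
    have hKball : K ⊆ closedBall 0 M := by
      rintro z ⟨hz, hlast⟩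
      have : Dbar (Quotient.mk _ ⟨z, hz⟩) = dist z 0 := by
        rw [hDbar]
        simp only [Quotient.lift_mk]
        rw [sl_of_last_zero hlast]
      have h2 : Dbar (Quotient.mk _ ⟨z, hz⟩) ≤ M := hqM (Set.mem_univ _)
      rw [this] at h2
      simpa [mem_closedBall] using h2
    -- closed
    have hKclosed : IsClosed K := by
      rw [← closure_subset_iff_isClosed]
      intro w hw
      have hwlast : w (Fin.last k) = 0 := by
        have hsub : closure K ⊆ {z : Fin (k + 1) → ℂ | z (Fin.last k) = 0} := by
          apply closure_minimal
          · rintro z ⟨-, h⟩; exact h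
          · exact isClosed_eq (continuous_apply _) continuous_const
        exact hsub hw
      refine ⟨?_, hwlast⟩
      by_contra hwZ
      -- invariant function: distance to the orbit of `w`
      have hginv : ∀ (x y : Z), (eucSetoid Z).r x y →
          infDist (sl x.1) (orb w) = infDist (sl y.1) (orb w) := by
        rintro x y ⟨β, h⟩
        rw [sl_rel β h]
        conv_rhs => rw [← diagMap_image_orb (conjTr β (x.1 (Fin.last k)))
          (conjTr_zero β _)]
        exact (infDist_image (diagMap _).isometry).symm
      set gbar : Quotient (eucSetoid Z) → ℝ :=
        Quotient.lift (fun z : Z => infDist (sl z.1) (orb w)) hginv with hgbar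
      have hgcont : Continuous gbar :=
        continuous_quot_lift _
          ((continuous_infDist_pt _).comp (continuous_sl.comp continuous_subtype_val))
      obtain ⟨qm, -, hqm⟩ := isCompact_univ.exists_isMinOn Set.univ_nonempty
        hgcont.continuousOn
      -- the minimum is positive
      have hqmpos : 0 < gbar qm := by
        obtain ⟨x, rfl⟩ := Quotient.exists_rep qm
        rcases lt_or_eq_of_le (infDist_nonneg (x := sl x.1) (s := orb w)) with h | h
        · exact h
        -- otherwise `sl x ∈ orb w` and hence `w ∈ Z`, contradiction
        exfalso
        have hmem : sl x.1 ∈ orb w :=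
          ((isCompact_orb w).isClosed.mem_iff_infDist_zero (orb_nonempty w)).mpr h.symm
        have hslx : sl x.1 ∈ Z := hslZ x.1 x.2
        rcases hmem with ⟨a, -, ha⟩ | ⟨a, -, ha⟩
        · -- sl x = a • w, so w = rotation a⁻¹ ∘ sl x ∈ Z
          have := hZ ((rotation a⁻¹).toIsometryEquiv) _ hslx
          apply hwZ
          convert this using 1
          funext i
          have hxi : sl x.1 i = (a : ℂ) * w i := congrFun ha.symm i
          simp only [LinearIsometryEquiv.coe_toIsometryEquiv, rotation_apply, hxi,
            Circle.coe_inv]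
          rw [← mul_assoc, inv_mul_cancel₀ (Circle.coe_ne_zero a), one_mul]
        · -- sl x = a • conj w, so w = a • conj ∘ sl x ∈ Z
          have := hZ ((conjLIE.trans (rotation a)).toIsometryEquiv) _ hslx
          apply hwZ
          convert this using 1
          funext i
          simp only [LinearIsometryEquiv.coe_toIsometryEquiv,
            LinearIsometryEquiv.trans_apply, conjLIE_apply, rotation_apply]
          have hxi : sl x.1 i = (a : ℂ) * conj (w i) := congrFun ha.symm i
          rw [hxi, map_mul, Complex.conj_conj, ← mul_assoc, ← Circle.coe_inv_eq_conj,
            ← Circle.coe_mul, mul_inv_cancel, Circle.coe_one, one_mul]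
      -- but points of `K` near `w` give small values of `gbar`
      obtain ⟨z, hzK, hzw⟩ := Metric.mem_closure_iff.mp hw (gbar qm) hqmpos
      have : gbar (Quotient.mk _ ⟨z, hzK.1⟩) ≤ dist z w := by
        rw [hgbar]
        simp only [Quotient.lift_mk]
        rw [sl_of_last_zero hzK.2]
        exact infDist_le_dist_of_mem (mem_orb_self w)
      have h2 : gbar qm ≤ gbar (Quotient.mk _ ⟨z, hzK.1⟩) :=
        hqm (Set.mem_univ _)
      rw [dist_comm] at hzw
      linarith
    exact (isCompact_closedBall (0 : Fin (k + 1) → ℂ) M).of_isClosed_subset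
      hKclosed hKball
  · intro hK
    rw [← isCompact_univ_iff]
    have hmap : Continuous fun p : K => Quotient.mk (eucSetoid Z) ⟨p.1, p.2.1⟩ :=
      hmkcont.comp (Continuous.subtype_mk continuous_subtype_val _)
    have himg : (fun p : K => Quotient.mk (eucSetoid Z) ⟨p.1, p.2.1⟩) '' Set.univ =
        Set.univ := by
      apply Set.eq_univ_of_forall
      intro q
      obtain ⟨⟨z, hz⟩, rfl⟩ := Quotient.exists_rep q
      exact ⟨⟨sl z, hslK z hz⟩, Set.mem_univ _, Quotient.sound (hslrel z hz)⟩
    rw [← himg]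
    have : CompactSpace K := isCompact_iff_compactSpace.mp hK
    exact isCompact_univ.image hmap
end
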